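/- Let L be the canonical lifting of a free action of S_m on a set Y. For a class [y, q] ∈ L n, one has Fix([y, q]) = 1 (i.e., the identity is the only permutation τ of Fin n with L τ [y, q] = [y, q]) if and only if q is bijective. Consequently the elements of L with Fix = 1 are exactly the classes of the form [y, id] ∈ L m with y ∈ Y. -/
import Mathlib


/-- The relation identifying `(y, q)` with `(σ • y, σ ∘ q)` for `σ ∈ S_m`, on pairs of an
element of `Y` and a surjection `Fin n → Fin m`. -/
def liftRel (m : ℕ) (Y : Type) [MulAction (Equiv.Perm (Fin m)) Y] (n : ℕ) :
    (Y × {q : Fin n → Fin m // Function.Surjective q}) →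
    (Y × {q : Fin n → Fin m // Function.Surjective q}) → Prop :=
  fun a b => ∃ σ : Equiv.Perm (Fin m), b.1 = σ • a.1 ∧ b.2.1 = ⇑σ ∘ a.2.1

/-- Level `n` of the canonical lifting of an action of `S_m` on `Y`: the quotient of
`{(y, q) : y ∈ Y, q : Fin n → Fin m surjective}` by `liftRel`. -/
def CanLifting (m : ℕ) (Y : Type) [MulAction (Equiv.Perm (Fin m)) Y] (n : ℕ) : Type :=
  Quot (liftRel m Y n)

/-- The class `[y, q]` in the canonical lifting. -/
def mkCl {m : ℕ} {Y : Type} [MulAction (Equiv.Perm (Fin m)) Y] {n : ℕ}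
    (y : Y) (q : Fin n → Fin m) (hq : Function.Surjective q) : CanLifting m Y n :=
  Quot.mk _ (y, ⟨q, hq⟩)

/-- Restriction of the canonical lifting along a surjection `f : Fin k → Fin n`:
`[y, q] ↦ [y, q ∘ f]`. -/
def CanLiftMap {m : ℕ} {Y : Type} [MulAction (Equiv.Perm (Fin m)) Y] {k n : ℕ}
    (f : Fin k → Fin n) (hf : Function.Surjective f) :
    CanLifting m Y n → CanLifting m Y k :=
  Quot.lift (fun a => Quot.mk _ (a.1, ⟨a.2.1 ∘ f, a.2.2.comp hf⟩))
    (fun a b hab => by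
      obtain ⟨σ, h1, h2⟩ := hab
      refine Quot.sound ⟨σ, h1, ?_⟩
      show b.2.1 ∘ f = ⇑σ ∘ (a.2.1 ∘ f)
      rw [h2]
      rfl)

/-- `Fix(ξ) = 1` for an element `ξ` of the canonical lifting: the identity is the only
permutation `τ` of `Fin n` with `L τ ξ = ξ`. -/
def FixT {m : ℕ} {Y : Type} [MulAction (Equiv.Perm (Fin m)) Y] {n : ℕ}
    (ξ : CanLifting m Y n) : Prop :=
  ∀ τ : Equiv.Perm (Fin n), CanLiftMap ⇑τ τ.surjective ξ = ξ → τ = 1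

lemma liftRel_equiv (m : ℕ) (Y : Type) [MulAction (Equiv.Perm (Fin m)) Y] (n : ℕ) :
    Equivalence (liftRel m Y n) := by
  constructor
  · intro a; exact ⟨1, by simp, by ext i; simp⟩
  · rintro a b ⟨σ, h1, h2⟩
    refine ⟨σ⁻¹, ?_, ?_⟩
    · rw [h1, inv_smul_smul]
    · rw [h2]; ext i; simp
  · rintro a b c ⟨σ, h1, h2⟩ ⟨σ', h1', h2'⟩
    refine ⟨σ' * σ, ?_, ?_⟩
    · rw [h1', h1, mul_smul]
    · rw [h2', h2]; ext i; simp

lemma mkCl_eq_iff {m : ℕ} {Y : Type} [MulAction (Equiv.Perm (Fin m)) Y] {n : ℕ}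
    (y y' : Y) (q q' : Fin n → Fin m) (hq : Function.Surjective q)
    (hq' : Function.Surjective q') :
    mkCl y q hq = mkCl y' q' hq' ↔
      ∃ σ : Equiv.Perm (Fin m), y' = σ • y ∧ q' = ⇑σ ∘ q := by
  constructor
  · intro h
    have := Quot.eq.mp h
    exact ((liftRel_equiv m Y n).eqvGen_iff).mp this
  · intro h
    exact Quot.sound h

/-- Let `L` be the canonical lifting of a free action of `S_m` on `Y`.
A class `[y, q] ∈ L n` has `Fix([y, q]) = 1` iff `q` is bijective; consequently, the
elements of `L` with trivial fixator are exactly the classes `[y', id] ∈ L m`, `y' ∈ Y`. -/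
theorem canLift_fixTrivial_iff_bijective {m : ℕ} (Y : Type)
    [MulAction (Equiv.Perm (Fin m)) Y]
    (hfree : ∀ (σ : Equiv.Perm (Fin m)) (y : Y), σ • y = y → σ = 1) :
    (∀ (n : ℕ) (y : Y) (q : Fin n → Fin m) (hq : Function.Surjective q),
      FixT (mkCl y q hq) ↔ Function.Bijective q) ∧
    (∀ ξ : CanLifting m Y m,
      FixT ξ ↔ ∃ y' : Y, ξ = mkCl y' id Function.surjective_id) := by
  have main : ∀ (n : ℕ) (y : Y) (q : Fin n → Fin m) (hq : Function.Surjective q),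
      FixT (mkCl y q hq) ↔ Function.Bijective q := by
    intro n y q hq
    constructor
    · intro hfix
      refine ⟨?_, hq⟩
      intro i j hij
      by_contra hne
      have h := hfix (Equiv.swap i j) ?_
      · exact hne (Equiv.swap_eq_one_iff.mp h)
      · show mkCl y (q ∘ ⇑(Equiv.swap i j)) _ = mkCl y q hq
        rw [mkCl_eq_iff]
        refine ⟨1, by simp, ?_⟩
        ext k
        simp only [Equiv.Perm.coe_one, Function.comp_apply, id_eq]
        rcases eq_or_ne k i with rfl | hki
        · rw [Equiv.swap_apply_left, hij]
        rcases eq_or_ne k j with rfl | hkj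
        · rw [Equiv.swap_apply_right, hij]
        · rw [Equiv.swap_apply_of_ne_of_ne hki hkj]
    · intro hbij τ hτ
      have h : mkCl y (q ∘ ⇑τ) (hq.comp τ.surjective) = mkCl y q hq := hτ
      rw [mkCl_eq_iff] at h
      obtain ⟨σ, h1, h2⟩ := h
      have hσ : σ = 1 := hfree σ y h1.symm
      subst hσ
      simp only [Equiv.Perm.coe_one, Function.id_comp] at h2
      apply Equiv.ext; intro i
      have := congrFun h2 i
      simp only [Function.comp_apply] at this
      simpa using hbij.1 this.symm
  refine ⟨main, ?_⟩
  intro ξ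
  obtain ⟨⟨y, q, hq⟩, rfl⟩ := Quot.exists_rep ξ
  have hrepr : (Quot.mk _ (y, ⟨q, hq⟩) : CanLifting m Y m) = mkCl y q hq := rfl
  rw [hrepr]
  constructor
  · intro hfix
    have hbij := (main m y q hq).mp hfix
    let e := Equiv.ofBijective q hbij
    refine ⟨e.symm • y, ?_⟩
    rw [mkCl_eq_iff]
    refine ⟨e.symm, rfl, ?_⟩
    ext i
    simp [e]
  · rintro ⟨y', h⟩
    rw [h]
    exact (main m y' id Function.surjective_id).mpr Function.bijective_id
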